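/- For any n ≥ 4, there exists a boolean function κ : 𝔹^n → 𝔹 and a point v such that, for the instance (v, κ(v)), there is an irrelevant feature i whose absolute Shapley value is strictly larger than the absolute Shapley value of every other feature. -/

import Mathlib

set_option maxHeartbeats 1000000


open Finset

/-- `X` is a weak abductive explanation (weak AXp) for classifier `κ` at point `v`:
every point agreeing with `v` on `X` gets the same prediction as `v`. -/
def weakAXp {n : ℕ} (κ : (Fin n → Bool) → Bool) (v : Fin n → Bool)
    (X : Finset (Fin n)) : Prop :=
  ∀ x : Fin n → Bool, (∀ i ∈ X, x i = v i) → κ x = κ v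

/-- `X` is an AXp: a subset-minimal weak AXp. -/
def AXp {n : ℕ} (κ : (Fin n → Bool) → Bool) (v : Fin n → Bool)
    (X : Finset (Fin n)) : Prop :=
  weakAXp κ v X ∧ ∀ X' ⊂ X, ¬ weakAXp κ v X'

/-- `Y` is a weak contrastive explanation (weak CXp) for `κ` at `v`:
some point agreeing with `v` outside `Y` gets a different prediction. -/
def weakCXp {n : ℕ} (κ : (Fin n → Bool) → Bool) (v : Fin n → Bool)
    (Y : Finset (Fin n)) : Prop :=
  ∃ x : Fin n → Bool, (∀ i ∉ Y, x i = v i) ∧ κ x ≠ κ v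

/-- `Y` is a CXp: a subset-minimal weak CXp. -/
def CXp {n : ℕ} (κ : (Fin n → Bool) → Bool) (v : Fin n → Bool)
    (Y : Finset (Fin n)) : Prop :=
  weakCXp κ v Y ∧ ∀ Y' ⊂ Y, ¬ weakCXp κ v Y'

/-- A feature is relevant if it occurs in some AXp. -/
def Relevant {n : ℕ} (κ : (Fin n → Bool) → Bool) (v : Fin n → Bool) (i : Fin n) : Prop :=
  ∃ X, AXp κ v X ∧ i ∈ X

/-- A feature is irrelevant if it occurs in no AXp. -/
def Irrelevant {n : ℕ} (κ : (Fin n → Bool) → Bool) (v : Fin n → Bool) (i : Fin n) : Prop :=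
  ¬ Relevant κ v i

/-- `phi κ v S` : average value of `κ` over points agreeing with `v` on `S`
(uniform distribution). -/
noncomputable def phi {n : ℕ} (κ : (Fin n → Bool) → Bool) (v : Fin n → Bool)
    (S : Finset (Fin n)) : ℝ :=
  (1 / 2 ^ (n - S.card)) *
    ∑ x ∈ Finset.univ.filter (fun x : Fin n → Bool => ∀ i ∈ S, x i = v i),
      (if κ x then (1 : ℝ) else 0)

/-- Shapley value of feature `i` for classifier `κ` at point `v`. -/
noncomputable def Sv {n : ℕ} (κ : (Fin n → Bool) → Bool) (v : Fin n → Bool)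
    (i : Fin n) : ℝ :=
  ∑ S ∈ (Finset.univ.erase i).powerset,
    ((S.card.factorial * (n - S.card - 1).factorial : ℝ) / n.factorial) *
      (phi κ v (insert i S) - phi κ v S)


lemma fact_id : ∀ (r a d : ℕ),
    (∑ t ∈ Finset.range (r+1),
      r.choose t * (a+t).factorial * (d + r - t).factorial) * (a+d+1).factorial
    = a.factorial * d.factorial * (a+d+r+1).factorial := by
  intro r
  induction r with
  | zero => intro a d; simp
  | succ r ih =>
    intro a d
    have key : (∑ t ∈ Finset.range (r+2),
        (r+1).choose t * (a+t).factorial * (d + (r+1) - t).factorial)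
        = (∑ t ∈ Finset.range (r+1), r.choose t * ((a+1)+t).factorial * (d + r - t).factorial)
        + (∑ t ∈ Finset.range (r+1), r.choose t * (a+t).factorial * ((d+1) + r - t).factorial) := by
      rw [Finset.sum_range_succ' (fun t => (r+1).choose t * (a+t).factorial * (d + (r+1) - t).factorial) (r+1)]
      have h2 : ∑ t ∈ Finset.range (r+1),
          (r+1).choose (t+1) * (a+(t+1)).factorial * (d + (r+1) - (t+1)).factorial
          = ∑ t ∈ Finset.range (r+1),
            (r.choose t + r.choose (t+1)) * (a+(t+1)).factorial * (d + r - t).factorial := by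
        apply Finset.sum_congr rfl
        intro t ht
        rw [Nat.choose_succ_succ]
        have e : d + (r+1) - (t+1) = d + r - t := by omega
        rw [e]
      rw [h2]
      have h3 : ∑ t ∈ Finset.range (r+1),
          (r.choose t + r.choose (t+1)) * (a+(t+1)).factorial * (d + r - t).factorial
          = (∑ t ∈ Finset.range (r+1), r.choose t * ((a+1)+t).factorial * (d + r - t).factorial)
          + ∑ t ∈ Finset.range (r+1), r.choose (t+1) * (a+(t+1)).factorial * (d + r - t).factorial := by
        rw [← Finset.sum_add_distrib]
        apply Finset.sum_congr rfl
        intro t ht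
        have : a + 1 + t = a + (t+1) := by omega
        rw [this]; ring
      rw [h3]
      -- remaining: ∑ r.choose (t+1) ... + first term = ∑ for (d+1)
      have h4 : (∑ t ∈ Finset.range (r+1), r.choose t * (a+t).factorial * ((d+1) + r - t).factorial)
          = (∑ t ∈ Finset.range r, r.choose (t+1) * (a+(t+1)).factorial * ((d+1) + r - (t+1)).factorial)
            + r.choose 0 * (a+0).factorial * ((d+1)+r-0).factorial := by
        rw [Finset.sum_range_succ' (fun t => r.choose t * (a+t).factorial * ((d+1) + r - t).factorial) r]
      have h5 : ∑ t ∈ Finset.range (r+1), r.choose (t+1) * (a+(t+1)).factorial * (d + r - t).factorial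
          = ∑ t ∈ Finset.range r, r.choose (t+1) * (a+(t+1)).factorial * ((d+1) + r - (t+1)).factorial := by
        rw [Finset.sum_range_succ, Nat.choose_succ_self]
        simp only [Nat.zero_mul, zero_mul, add_zero]
        apply Finset.sum_congr rfl
        intro t ht
        have e : d + r - t = d + 1 + r - (t+1) := by omega
        rw [e]
      have h6 : (r+1).choose 0 * (a+0).factorial * (d + (r+1) - 0).factorial
          = r.choose 0 * (a+0).factorial * ((d+1)+r-0).factorial := by
        have e : d + (r+1) = d+1+r := by omega
        rw [e]
        simp
      rw [h5, h6, h4]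
      ring
    rw [key, add_mul]
    -- multiply both sides by (a+d+2); use cancellation
    apply Nat.eq_of_mul_eq_mul_right (show 0 < a+d+2 by omega)
    have e1 : (∑ t ∈ Finset.range (r+1), r.choose t * ((a+1)+t).factorial * (d + r - t).factorial)
        * (a+d+1).factorial * (a+d+2)
        = (∑ t ∈ Finset.range (r+1), r.choose t * ((a+1)+t).factorial * (d + r - t).factorial)
        * ((a+1)+d+1).factorial := by
      have : ((a+1)+d+1).factorial = (a+d+2) * (a+d+1).factorial := by
        have : (a+1)+d+1 = (a+d+1)+1 := by omega
        rw [this, Nat.factorial_succ]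
      rw [this]; ring
    have e2 : (∑ t ∈ Finset.range (r+1), r.choose t * (a+t).factorial * ((d+1) + r - t).factorial)
        * (a+d+1).factorial * (a+d+2)
        = (∑ t ∈ Finset.range (r+1), r.choose t * (a+t).factorial * ((d+1) + r - t).factorial)
        * (a+(d+1)+1).factorial := by
      have : (a+(d+1)+1).factorial = (a+d+2) * (a+d+1).factorial := by
        have : a+(d+1)+1 = (a+d+1)+1 := by omega
        rw [this, Nat.factorial_succ]
      rw [this]; ring
    rw [add_mul, e1, e2, ih (a+1) d, ih a (d+1)]
    have f1 : (a+1).factorial = (a+1) * a.factorial := Nat.factorial_succ a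
    have f2 : (d+1).factorial = (d+1) * d.factorial := Nat.factorial_succ d
    have g1 : a+1+d+r+1 = a+d+(r+1)+1 := by omega
    have g2 : a+(d+1)+r+1 = a+d+(r+1)+1 := by omega
    rw [f1, f2, g1, g2]
    ring

def f4 (p : Fin 4 → Bool) : Bool :=
  p 0 && (p 1 || p 2 || p 3) && !(p 1 && p 2 && p 3)

variable {n : ℕ}

def emb (hn : 4 ≤ n) (k : Fin 4) : Fin n := ⟨k.1, lt_of_lt_of_le k.isLt hn⟩

lemma emb_inj (hn : 4 ≤ n) : Function.Injective (emb hn) :=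
  fun a b h => Fin.ext (by simpa [emb] using congrArg Fin.val h)

def kap (hn : 4 ≤ n) (x : Fin n → Bool) : Bool := f4 (fun k => x (emb hn k))

def AA (hn : 4 ≤ n) (S : Finset (Fin n)) : Finset (Fin 4) :=
  univ.filter (fun k => emb hn k ∈ S)

def Nc (B : Finset (Fin 4)) : ℕ :=
  (univ.filter (fun p : Fin 4 → Bool => (∀ k ∈ B, p k = true) ∧ f4 p = true)).card

noncomputable def Φ (B : Finset (Fin 4)) : ℝ := (Nc B : ℝ) / 2 ^ (4 - B.card)

lemma filter_low_eq (hn : 4 ≤ n) (S : Finset (Fin n)) :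
    S.filter (fun i => i.1 < 4) = (AA hn S).image (emb hn) := by
  ext i
  simp only [mem_filter, mem_image, AA, mem_univ, true_and]
  constructor
  · rintro ⟨hiS, hlt⟩
    exact ⟨⟨i.1, hlt⟩, by simpa [emb] using hiS, by simp [emb]⟩
  · rintro ⟨k, hk, rfl⟩
    exact ⟨hk, (emb hn k).2.trans_le (le_refl n) |>.trans_le (le_refl n) |> fun _ => k.2⟩

lemma card_filter_low (hn : 4 ≤ n) (S : Finset (Fin n)) :
    (S.filter (fun i => i.1 < 4)).card = (AA hn S).card := by
  rw [filter_low_eq hn S, Finset.card_image_of_injective _ (emb_inj hn)]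

lemma phi_eq (hn : 4 ≤ n) (S : Finset (Fin n)) :
    phi (kap hn) (fun _ => true) S = Φ (AA hn S) := by
  classical
  set a := (AA hn S).card with ha
  set s := S.card with hs
  -- card facts
  have hsa : (S.filter (fun i => ¬ i.1 < 4)).card = s - a := by
    have h1 := Finset.card_filter_add_card_filter_not
      (s := S) (p := fun i : Fin n => i.1 < 4)
    rw [card_filter_low hn S] at h1
    omega
  have hU4 : ((univ : Finset (Fin n)).filter (fun i => i.1 < 4)).card = 4 := by
    rw [card_filter_low hn univ]
    have : AA hn univ = univ := by simp [AA]
    rw [this, card_univ, Fintype.card_fin]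
  have hU2 : ((univ : Finset (Fin n)).filter (fun i => ¬ i.1 < 4)).card = n - 4 := by
    have h1 := Finset.card_filter_add_card_filter_not
      (s := (univ : Finset (Fin n))) (p := fun i : Fin n => i.1 < 4)
    rw [hU4, card_univ, Fintype.card_fin] at h1
    omega
  have ha4 : a ≤ 4 := by
    rw [ha, ← card_filter_low hn S]
    calc (S.filter (fun i => i.1 < 4)).card
        ≤ ((univ : Finset (Fin n)).filter (fun i => i.1 < 4)).card := by
          apply Finset.card_le_card; apply Finset.filter_subset_filter; exact Finset.subset_univ S
      _ = 4 := hU4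
  have has : a ≤ s := by
    rw [ha, ← card_filter_low hn S, hs]
    exact Finset.card_le_card (Finset.filter_subset _ _)
  have hsn : s ≤ n := by
    rw [hs]; simpa using Finset.card_le_univ S
  have hsan : s - a ≤ n - 4 := by
    rw [← hsa, ← hU2]
    apply Finset.card_le_card; apply Finset.filter_subset_filter; exact Finset.subset_univ S
  -- the count of free high coordinates
  set D := n - 4 - (s - a) with hD
  have hDcard : (((univ : Finset (Fin n)).filter (fun i => ¬ i.1 < 4)).filter
      (fun i => i ∉ S)).card = D := by
    have h1 := Finset.card_filter_add_card_filter_not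
      (s := (univ : Finset (Fin n)).filter (fun i => ¬ i.1 < 4)) (p := fun i => i ∈ S)
    have h2 : (((univ : Finset (Fin n)).filter (fun i => ¬ i.1 < 4)).filter
        (fun i => i ∈ S)).card = s - a := by
      rw [← hsa]
      congr 1
      ext i
      simp only [mem_filter, mem_univ, true_and]
      tauto
    omega
  -- pointwise expansion of the kappa indicator
  have expand : ∀ x : Fin n → Bool, (if kap hn x then (1:ℝ) else 0)
      = ∑ p : Fin 4 → Bool, (if f4 p then (1:ℝ) else 0) *
          ∏ k : Fin 4, (if x (emb hn k) = p k then 1 else 0) := by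
    intro x
    rw [Finset.sum_eq_single (fun k => x (emb hn k))]
    · simp [kap]; congr
    · intro p _ hne
      have hex : ∃ k, x (emb hn k) ≠ p k := by
        by_contra h
        push_neg at h
        exact hne (funext fun k => (h k).symm)
      obtain ⟨k, hk⟩ := hex
      rw [Finset.prod_eq_zero (Finset.mem_univ k) (by simp [hk])]
      ring
    · simp
  have immem : (univ : Finset (Fin n)).filter (fun i => i.1 < 4) = univ.image (emb hn) := by
    have h3 : AA hn (univ : Finset (Fin n)) = univ := by simp [AA]
    have := filter_low_eq hn (univ : Finset (Fin n))
    rwa [h3] at this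
  -- inner sum evaluation for a fixed pattern p
  have inner : ∀ p : Fin 4 → Bool,
      (∑ x : Fin n → Bool, (if (∀ i ∈ S, x i = true) then (1:ℝ) else 0) *
        ∏ k : Fin 4, (if x (emb hn k) = p k then 1 else 0))
      = (if (∀ k ∈ AA hn S, p k = true) then (1:ℝ) else 0) * 2 ^ D := by
    intro p
    have point : ∀ x : Fin n → Bool,
        (if (∀ i ∈ S, x i = true) then (1:ℝ) else 0) *
          ∏ k : Fin 4, (if x (emb hn k) = p k then 1 else 0)
        = ∏ i : Fin n, ((if i ∈ S then (if x i = true then (1:ℝ) else 0) else 1) *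
            (if h : i.1 < 4 then (if x i = p ⟨i.1, h⟩ then 1 else 0) else 1)) := by
      intro x
      rw [Finset.prod_mul_distrib]
      congr 1
      · rw [Finset.prod_ite_mem, Finset.univ_inter, Finset.prod_boole]
        simp
      · rw [← Finset.prod_filter_mul_prod_filter_not univ (fun i : Fin n => i.1 < 4)]
        have h1 : ∏ i ∈ univ.filter (fun i : Fin n => ¬ i.1 < 4),
            (if h : i.1 < 4 then (if x i = p ⟨i.1, h⟩ then (1:ℝ) else 0) else 1) = 1 :=
          Finset.prod_eq_one (fun i hi => by rw [dif_neg (Finset.mem_filter.mp hi).2])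
        rw [h1, mul_one, immem, Finset.prod_image (fun a _ b _ h => emb_inj hn h)]
        apply Finset.prod_congr rfl
        intro k _
        rw [dif_pos (show (emb hn k).1 < 4 from k.2)]
        rfl
    calc (∑ x : Fin n → Bool, (if (∀ i ∈ S, x i = true) then (1:ℝ) else 0) *
            ∏ k : Fin 4, (if x (emb hn k) = p k then 1 else 0))
        = ∑ x ∈ Fintype.piFinset (fun _ : Fin n => (univ : Finset Bool)),
            ∏ i : Fin n, ((if i ∈ S then (if x i = true then (1:ℝ) else 0) else 1) *
              (if h : i.1 < 4 then (if x i = p ⟨i.1, h⟩ then 1 else 0) else 1)) := by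
          rw [Fintype.piFinset_univ]
          exact Finset.sum_congr rfl (fun x _ => point x)
      _ = ∏ i : Fin n, ∑ b ∈ (univ : Finset Bool),
            ((if i ∈ S then (if b = true then (1:ℝ) else 0) else 1) *
              (if h : i.1 < 4 then (if b = p ⟨i.1, h⟩ then 1 else 0) else 1)) :=
          (Finset.prod_univ_sum (fun _ : Fin n => (univ : Finset Bool))
            (fun i b => (if i ∈ S then (if b = true then (1:ℝ) else 0) else 1) *
              (if h : i.1 < 4 then (if b = p ⟨i.1, h⟩ then 1 else 0) else 1))).symm
      _ = ∏ i : Fin n, (if h : i.1 < 4 then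
              (if i ∈ S then (if p ⟨i.1, h⟩ = true then (1:ℝ) else 0) else 1)
            else (if i ∈ S then 1 else 2)) := by
          apply Finset.prod_congr rfl
          intro i _
          have hsum : ∀ (g : Bool → ℝ), (∑ b ∈ (univ : Finset Bool), g b) = g true + g false :=
            fun g => by rw [Fintype.sum_bool]
          rw [hsum]
          simp only
          by_cases hl : i.1 < 4 <;> by_cases hs : i ∈ S
          · cases hp : p ⟨i.1, hl⟩ <;> simp [hl, hs, hp]
          · cases hp : p ⟨i.1, hl⟩ <;> simp [hl, hs, hp]
          · simp [hl, hs]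
          · simp [hl, hs]
            norm_num
      _ = (if (∀ k ∈ AA hn S, p k = true) then (1:ℝ) else 0) * 2 ^ D := by
          rw [← Finset.prod_filter_mul_prod_filter_not univ (fun i : Fin n => i.1 < 4)]
          congr 1
          · rw [immem, Finset.prod_image (fun a _ b _ h => emb_inj hn h)]
            have heach : ∀ k : Fin 4, (if h : (emb hn k).1 < 4 then
                (if emb hn k ∈ S then (if p ⟨(emb hn k).1, h⟩ = true then (1:ℝ) else 0) else 1)
              else (if emb hn k ∈ S then 1 else 2))
              = (if emb hn k ∈ S then (if p k = true then (1:ℝ) else 0) else 1) := by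
              intro k
              rw [dif_pos (show (emb hn k).1 < 4 from k.2)]
              rfl
            rw [Finset.prod_congr rfl (fun k _ => heach k), ← Finset.prod_filter,
              Finset.prod_boole]
            by_cases hC : ∀ k ∈ AA hn S, p k = true
            · have hC' : ∀ i ∈ filter (fun a => emb hn a ∈ S) univ, p i = true := hC
              rw [if_pos hC', if_pos hC]
            · have hC' : ¬ ∀ i ∈ filter (fun a => emb hn a ∈ S) univ, p i = true := hC
              rw [if_neg hC', if_neg hC]
          · have heach : ∀ i ∈ univ.filter (fun i : Fin n => ¬ i.1 < 4),
                (if h : i.1 < 4 then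
                  (if i ∈ S then (if p ⟨i.1, h⟩ = true then (1:ℝ) else 0) else 1)
                else (if i ∈ S then 1 else 2))
                = (if i ∈ S then 1 else 2) := fun i hi => by
              rw [dif_neg (Finset.mem_filter.mp hi).2]
            rw [Finset.prod_congr rfl heach,
              ← Finset.prod_filter_mul_prod_filter_not
                (univ.filter (fun i : Fin n => ¬ i.1 < 4)) (fun i => i ∈ S)]
            have e1 : ∏ i ∈ (univ.filter (fun i : Fin n => ¬ i.1 < 4)).filter (fun i => i ∈ S),
                (if i ∈ S then (1:ℝ) else 2) = 1 :=
              Finset.prod_eq_one (fun i hi => by rw [if_pos (Finset.mem_filter.mp hi).2])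
            have e2 : ∏ i ∈ (univ.filter (fun i : Fin n => ¬ i.1 < 4)).filter (fun i => ¬ i ∈ S),
                (if i ∈ S then (1:ℝ) else 2) = 2 ^ D := by
              have heach2 : ∀ i ∈ (univ.filter (fun i : Fin n => ¬ i.1 < 4)).filter
                  (fun i => ¬ i ∈ S), (if i ∈ S then (1:ℝ) else 2) = 2 := fun i hi => by
                rw [if_neg (Finset.mem_filter.mp hi).2]
              rw [Finset.prod_congr rfl heach2, Finset.prod_const, hDcard]
            rw [e1, one_mul, e2]
  -- assemble
  have step1 : (∑ x ∈ Finset.univ.filter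
        (fun x : Fin n → Bool => ∀ i ∈ S, x i = (fun _ : Fin n => true) i),
        (if kap hn x then (1:ℝ) else 0))
      = (Nc (AA hn S) : ℝ) * 2 ^ D := by
    rw [Finset.sum_filter]
    calc (∑ x : Fin n → Bool,
            if (∀ i ∈ S, x i = (fun _ : Fin n => true) i) then (if kap hn x then (1:ℝ) else 0) else 0)
        = ∑ x : Fin n → Bool, (if (∀ i ∈ S, x i = true) then (1:ℝ) else 0) *
            (if kap hn x then (1:ℝ) else 0) := by
          apply Finset.sum_congr rfl
          intro x _
          by_cases h : ∀ i ∈ S, x i = true <;> by_cases hk : kap hn x <;> simp [h, hk]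
      _ = ∑ p : Fin 4 → Bool, (if f4 p then (1:ℝ) else 0) *
            (∑ x : Fin n → Bool, (if (∀ i ∈ S, x i = true) then (1:ℝ) else 0) *
              ∏ k : Fin 4, (if x (emb hn k) = p k then 1 else 0)) := by
          simp_rw [expand, Finset.mul_sum]
          rw [Finset.sum_comm]
          apply Finset.sum_congr rfl
          intro p _
          apply Finset.sum_congr rfl
          intro x _
          ring
      _ = ∑ p : Fin 4 → Bool, (if ((∀ k ∈ AA hn S, p k = true) ∧ f4 p = true) then (1:ℝ) else 0)
            * 2 ^ D := by
          apply Finset.sum_congr rfl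
          intro p _
          rw [inner p]
          by_cases hf : f4 p <;> by_cases hC : ∀ k ∈ AA hn S, p k = true <;>
            simp [hf, hC]
      _ = (Nc (AA hn S) : ℝ) * 2 ^ D := by
          rw [← Finset.sum_mul, Finset.sum_boole, Nc]
  rw [phi, step1, Φ]
  have hexp : n - s = D + (4 - a) := by omega
  rw [show n - S.card = D + (4 - a) from hexp, pow_add]
  have h2D : (2:ℝ) ^ D ≠ 0 := by positivity
  have h2a : (2:ℝ) ^ (4 - a) ≠ 0 := by positivity
  field_simp
  ring

lemma card_high (hn : 4 ≤ n) :
    ((univ : Finset (Fin n)).filter (fun i => ¬ i.1 < 4)).card = n - 4 := by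
  have h1 := Finset.card_filter_add_card_filter_not
    (s := (univ : Finset (Fin n))) (p := fun i : Fin n => i.1 < 4)
  have hU4 : ((univ : Finset (Fin n)).filter (fun i => i.1 < 4)).card = 4 := by
    rw [card_filter_low hn univ]
    have : AA hn univ = univ := by simp [AA]
    rw [this, card_univ, Fintype.card_fin]
  rw [hU4, card_univ, Fintype.card_fin] at h1
  omega

lemma AA_insert (hn : 4 ≤ n) (m : Fin 4) (S : Finset (Fin n)) :
    AA hn (insert (emb hn m) S) = insert m (AA hn S) := by
  ext k
  simp only [AA, mem_filter, mem_univ, true_and, Finset.mem_insert]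
  constructor
  · rintro (h | h)
    · exact Or.inl (emb_inj hn h)
    · exact Or.inr h
  · rintro (rfl | h)
    · exact Or.inl rfl
    · exact Or.inr h

lemma AA_insert_dummy (hn : 4 ≤ n) (j : Fin n) (hj : ¬ j.1 < 4) (S : Finset (Fin n)) :
    AA hn (insert j S) = AA hn S := by
  ext k
  simp only [AA, mem_filter, mem_univ, true_and, Finset.mem_insert]
  constructor
  · rintro (h | h)
    · exact absurd (show (emb hn k).1 < 4 from k.2) (h ▸ hj)
    · exact h
  · exact fun h => Or.inr h

lemma Sv_dummy (hn : 4 ≤ n) (j : Fin n) (hj : ¬ j.1 < 4) :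
    Sv (kap hn) (fun _ => true) j = 0 := by
  rw [Sv]
  apply Finset.sum_eq_zero
  intro S _
  rw [phi_eq hn, phi_eq hn, AA_insert_dummy hn j hj, sub_self, mul_zero]

lemma Wlem (hn : 4 ≤ n) (b : ℕ) (hb : b ≤ 3) :
    (∑ T ∈ ((univ : Finset (Fin n)).filter (fun i => ¬ i.1 < 4)).powerset,
      (((b + T.card).factorial * (n - (b + T.card) - 1).factorial : ℕ) : ℝ) / n.factorial)
    = ((b.factorial * (3 - b).factorial : ℕ) : ℝ) / 24 := by
  have hnat : (∑ t ∈ Finset.range (n-4+1),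
      (n-4).choose t * (b+t).factorial * (n - (b+t) - 1).factorial) * 24
      = b.factorial * (3-b).factorial * n.factorial := by
    have hfi := fact_id (n-4) b (3-b)
    have e1 : b + (3-b) + 1 = 4 := by omega
    have e2 : b + (3-b) + (n-4) + 1 = n := by omega
    rw [e1, e2] at hfi
    have e3 : ∀ t ∈ Finset.range (n-4+1),
        (n-4).choose t * (b+t).factorial * ((3-b) + (n-4) - t).factorial
        = (n-4).choose t * (b+t).factorial * (n - (b+t) - 1).factorial := by
      intro t ht
      rw [Finset.mem_range] at ht
      congr 2
      omega
    rw [Finset.sum_congr rfl e3] at hfi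
    rw [← hfi]
    norm_num [Nat.factorial]
  have hsum : (∑ T ∈ ((univ : Finset (Fin n)).filter (fun i => ¬ i.1 < 4)).powerset,
      (((b + T.card).factorial * (n - (b + T.card) - 1).factorial : ℕ) : ℝ) / n.factorial)
      = ((∑ t ∈ Finset.range (n-4+1),
        (n-4).choose t * (b+t).factorial * (n - (b+t) - 1).factorial : ℕ) : ℝ) / n.factorial := by
    rw [Finset.sum_powerset, card_high hn]
    rw [Nat.cast_sum, Finset.sum_div]
    apply Finset.sum_congr rfl
    intro j hj
    have hc : ∀ T ∈ Finset.powersetCard j ((univ : Finset (Fin n)).filter (fun i => ¬ i.1 < 4)),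
        (((b + T.card).factorial * (n - (b + T.card) - 1).factorial : ℕ) : ℝ) / n.factorial
        = (((b + j).factorial * (n - (b + j) - 1).factorial : ℕ) : ℝ) / n.factorial := by
      intro T hT
      rw [(Finset.mem_powersetCard.mp hT).2]
    rw [Finset.sum_congr rfl hc, Finset.sum_const, Finset.card_powersetCard, card_high hn,
      nsmul_eq_mul]
    push_cast
    ring
  rw [hsum]
  have hn24 : ((24:ℕ):ℝ) ≠ 0 := by norm_num
  have hnf : ((n.factorial : ℕ) : ℝ) ≠ 0 := by
    exact_mod_cast Nat.cast_ne_zero.mpr (Nat.factorial_ne_zero n)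
  rw [div_eq_div_iff hnf (by norm_num)]
  push_cast
  exact_mod_cast congrArg (fun z : ℕ => (z : ℝ)) hnat

lemma card_AA_eq (hn : 4 ≤ n) (S : Finset (Fin n)) :
    S.card = (AA hn S).card + (S.filter (fun i => ¬ i.1 < 4)).card := by
  have h1 := Finset.card_filter_add_card_filter_not
    (s := S) (p := fun i : Fin n => i.1 < 4)
  rw [card_filter_low hn S] at h1
  omega

lemma key (hn : 4 ≤ n) (m : Fin 4) :
    Sv (kap hn) (fun _ => true) (emb hn m)
    = ∑ B ∈ ((univ : Finset (Fin 4)).erase m).powerset,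
        (Φ (insert m B) - Φ B) *
          (((B.card.factorial * (3 - B.card).factorial : ℕ) : ℝ) / 24) := by
  classical
  rw [Sv]
  have hterm : ∀ S ∈ ((univ : Finset (Fin n)).erase (emb hn m)).powerset,
      ((S.card.factorial * (n - S.card - 1).factorial : ℝ) / n.factorial) *
        (phi (kap hn) (fun _ => true) (insert (emb hn m) S) - phi (kap hn) (fun _ => true) S)
      = ((S.card.factorial * (n - S.card - 1).factorial : ℝ) / n.factorial) *
        (Φ (insert m (AA hn S)) - Φ (AA hn S)) := by
    intro S _
    rw [phi_eq hn, phi_eq hn, AA_insert hn m S]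
  rw [Finset.sum_congr rfl hterm]
  have hmap : ∀ S ∈ ((univ : Finset (Fin n)).erase (emb hn m)).powerset,
      AA hn S ∈ ((univ : Finset (Fin 4)).erase m).powerset := by
    intro S hS
    rw [Finset.mem_powerset] at hS ⊢
    intro k hk
    rw [AA, Finset.mem_filter] at hk
    rw [Finset.mem_erase]
    refine ⟨?_, Finset.mem_univ k⟩
    rintro rfl
    exact (Finset.mem_erase.mp (hS hk.2)).1 rfl
  rw [← Finset.sum_fiberwise_of_maps_to hmap]
  apply Finset.sum_congr rfl
  intro B hB
  have hb3 : B.card ≤ 3 := by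
    have := Finset.card_le_card (Finset.mem_powerset.mp hB)
    simpa [Finset.card_erase_of_mem] using this
  have h1 : ∀ S ∈ (((univ : Finset (Fin n)).erase (emb hn m)).powerset).filter
      (fun S => AA hn S = B),
      ((S.card.factorial * (n - S.card - 1).factorial : ℝ) / n.factorial) *
        (Φ (insert m (AA hn S)) - Φ (AA hn S))
      = (Φ (insert m B) - Φ B) *
        ((S.card.factorial * (n - S.card - 1).factorial : ℝ) / n.factorial) := by
    intro S hS
    rw [(Finset.mem_filter.mp hS).2]
    ring
  rw [Finset.sum_congr rfl h1, ← Finset.mul_sum]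
  congr 1
  -- weight sum over the fiber
  have hW : (∑ S ∈ (((univ : Finset (Fin n)).erase (emb hn m)).powerset).filter
        (fun S => AA hn S = B),
      ((S.card.factorial * (n - S.card - 1).factorial : ℝ) / n.factorial))
      = ∑ T ∈ ((univ : Finset (Fin n)).filter (fun i => ¬ i.1 < 4)).powerset,
        (((B.card + T.card).factorial * (n - (B.card + T.card) - 1).factorial : ℕ) : ℝ)
          / n.factorial := by
    apply Finset.sum_nbij' (i := fun S => S.filter (fun i => ¬ i.1 < 4))
      (j := fun T => T ∪ B.image (emb hn))
    · intro S hS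
      rw [Finset.mem_powerset]
      exact Finset.filter_subset_filter _ (Finset.subset_univ S)
    · intro T hT
      rw [Finset.mem_powerset] at hT
      rw [Finset.mem_filter, Finset.mem_powerset]
      have hTh : ∀ x ∈ T, ¬ x.1 < 4 := fun x hx => (Finset.mem_filter.mp (hT hx)).2
      constructor
      · intro x hx
        rw [Finset.mem_union] at hx
        rw [Finset.mem_erase]
        refine ⟨?_, Finset.mem_univ x⟩
        rcases hx with hx | hx
        · intro hxe
          have : (emb hn m).1 < 4 := m.2
          rw [← hxe] at this
          exact hTh x hx this
        · obtain ⟨k, hk, rfl⟩ := Finset.mem_image.mp hx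
          intro hke
          have : k = m := emb_inj hn hke
          subst this
          exact (Finset.mem_erase.mp (Finset.mem_powerset.mp hB hk)).1 rfl
      · ext k
        rw [AA, Finset.mem_filter]
        simp only [Finset.mem_univ, true_and, Finset.mem_union]
        constructor
        · rintro (h | h)
          · exact absurd (show (emb hn k).1 < 4 from k.2) (hTh _ h)
          · obtain ⟨k', hk', he⟩ := Finset.mem_image.mp h
            rwa [← emb_inj hn he]
        · intro h
          exact Or.inr (Finset.mem_image.mpr ⟨k, h, rfl⟩)
    · intro S hS
      have hASB : AA hn S = B := (Finset.mem_filter.mp hS).2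
      rw [← hASB, ← filter_low_eq hn S, Finset.union_comm,
        Finset.filter_union_filter_not_eq]
    · intro T hT
      rw [Finset.mem_powerset] at hT
      have hTh : ∀ x ∈ T, ¬ x.1 < 4 := fun x hx => (Finset.mem_filter.mp (hT hx)).2
      rw [Finset.filter_union]
      have e1 : T.filter (fun i => ¬ i.1 < 4) = T := Finset.filter_true_of_mem hTh
      have e2 : (B.image (emb hn)).filter (fun i => ¬ i.1 < 4) = ∅ := by
        apply Finset.filter_false_of_mem
        intro x hx
        obtain ⟨k, _, rfl⟩ := Finset.mem_image.mp hx
        simpa using (show (emb hn k).1 < 4 from k.2)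
      rw [e1, e2, Finset.union_empty]
    · intro S hS
      have hASB : AA hn S = B := (Finset.mem_filter.mp hS).2
      have hcard : S.card = B.card + (S.filter (fun i => ¬ i.1 < 4)).card := by
        have := card_AA_eq hn S
        rw [hASB] at this
        exact this
      rw [← hcard]
      push_cast
      ring
  rw [hW, Wlem hn B.card hb3]

lemma alg (b : ℕ) (hb : b ≤ 3) (A C F : ℝ) :
    (A / 2^(3-b) - C / 2^(4-b)) * (F/24) = ((2*A - C) * F * 2^b)/384 := by
  have e : 4 - b = (3-b) + 1 := by omega
  have e1 : (2:ℝ)^(3-b) * 2^b = 8 := by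
    rw [← pow_add]
    have h3 : 3 - b + b = 3 := by omega
    rw [h3]; norm_num
  rw [e, pow_succ]
  have hx : (2:ℝ)^(3-b) ≠ 0 := by positivity
  have hb' : (2:ℝ)^b = 8/(2:ℝ)^(3-b) := by
    rw [eq_div_iff hx]; linarith [e1]
  rw [hb']
  field_simp
  ring

def rhsz (m : Fin 4) : ℤ :=
  ∑ B ∈ ((univ : Finset (Fin 4)).erase m).powerset,
    (2 * Nc (insert m B) - Nc B) * B.card.factorial * (3 - B.card).factorial * 2 ^ B.card

lemma rhsz_val : ∀ m : Fin 4, rhsz m = if m = 0 then 96 else -80 := by decide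

lemma Sv_emb (hn : 4 ≤ n) (m : Fin 4) :
    Sv (kap hn) (fun _ => true) (emb hn m) = ((rhsz m : ℤ) : ℝ) / 384 := by
  rw [key hn m, rhsz]
  push_cast
  rw [Finset.sum_div]
  apply Finset.sum_congr rfl
  intro B hB
  have hmB : m ∉ B := by
    intro h
    exact (Finset.mem_erase.mp (Finset.mem_powerset.mp hB h)).1 rfl
  have hb3 : B.card ≤ 3 := by
    have := Finset.card_le_card (Finset.mem_powerset.mp hB)
    simpa [Finset.card_erase_of_mem] using this
  have hci : (insert m B).card = B.card + 1 := Finset.card_insert_of_notMem hmB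
  rw [Φ, Φ, hci]
  have e : 4 - (B.card + 1) = 3 - B.card := by omega
  rw [e]
  have := alg B.card hb3 (Nc (insert m B) : ℝ) (Nc B : ℝ)
    ((B.card.factorial * (3 - B.card).factorial : ℕ) : ℝ)
  push_cast at this ⊢
  rw [this]
  ring

-- irrelevance part
def weak3 (B : Finset (Fin 4)) : Prop :=
  ∀ p : Fin 4 → Bool, (∀ k ∈ B, p k = true) → f4 p = f4 (fun _ => true)

instance : DecidablePred weak3 := fun B => by
  unfold weak3; infer_instance

lemma f4_down : ∀ B : Finset (Fin 4), weak3 (insert 0 B) → weak3 B := by decide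

lemma kap_v (hn : 4 ≤ n) : kap hn (fun _ => true) = f4 (fun _ => true) := rfl

lemma bridge (hn : 4 ≤ n) (X : Finset (Fin n)) :
    weakAXp (kap hn) (fun _ => true) X ↔ weak3 (AA hn X) := by
  constructor
  · intro h p hp
    set x : Fin n → Bool := fun i => if hi : i.1 < 4 then p ⟨i.1, hi⟩ else true with hx
    have hagree : ∀ i ∈ X, x i = (fun _ : Fin n => true) i := by
      intro i hi
      by_cases hlt : i.1 < 4
      · have hk : (⟨i.1, hlt⟩ : Fin 4) ∈ AA hn X := by
          rw [AA, Finset.mem_filter]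
          exact ⟨Finset.mem_univ _, by
            have he : emb hn ⟨i.1, hlt⟩ = i := rfl
            rwa [he]⟩
        simp only [hx, dif_pos hlt]
        exact hp _ hk
      · simp only [hx, dif_neg hlt]
    have hkx := h x hagree
    rw [kap_v hn] at hkx
    rw [← hkx, kap]
    congr 1
    funext k
    simp only [hx, dif_pos (show (emb hn k).1 < 4 from k.2)]
    rfl
  · intro h x hagree
    rw [kap_v hn, kap]
    apply h
    intro k hk
    rw [AA, Finset.mem_filter] at hk
    exact hagree _ hk.2

lemma irrel (hn : 4 ≤ n) : Irrelevant (kap hn) (fun _ => true) (emb hn 0) := by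
  rintro ⟨X, hAXp, h0X⟩
  have h0A : (0 : Fin 4) ∈ AA hn X := by
    rw [AA, Finset.mem_filter]
    exact ⟨Finset.mem_univ _, h0X⟩
  have hsub : X.erase (emb hn 0) ⊂ X := Finset.erase_ssubset h0X
  apply hAXp.2 _ hsub
  rw [bridge hn]
  have hAAe : AA hn (X.erase (emb hn 0)) = (AA hn X).erase 0 := by
    ext k
    simp only [AA, Finset.mem_filter, Finset.mem_univ, true_and, Finset.mem_erase]
    constructor
    · intro hk
      exact ⟨fun h => hk.1 (by rw [h]), hk.2⟩
    · intro hk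
      exact ⟨fun h => hk.1 (emb_inj hn h), hk.2⟩
  rw [hAAe]
  apply f4_down
  rw [Finset.insert_erase h0A]
  rw [← bridge hn]
  exact hAXp.1

theorem stmt8 (n : ℕ) (hn : 4 ≤ n) :
    ∃ (κ : (Fin n → Bool) → Bool) (v : Fin n → Bool) (i : Fin n),
      Irrelevant κ v i ∧ ∀ j, j ≠ i → |Sv κ v j| < |Sv κ v i| := by
  refine ⟨kap hn, fun _ => true, emb hn 0, irrel hn, ?_⟩
  intro j hj
  have h0 : Sv (kap hn) (fun _ => true) (emb hn 0) = 96 / 384 := by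
    rw [Sv_emb hn 0, rhsz_val 0]
    norm_num
  by_cases hlt : j.1 < 4
  · have hje : j = emb hn ⟨j.1, hlt⟩ := rfl
    have hm0 : (⟨j.1, hlt⟩ : Fin 4) ≠ 0 := by
      intro h
      apply hj
      rw [hje, h]
    have hv : Sv (kap hn) (fun _ => true) j = -80/384 := by
      rw [hje, Sv_emb hn _, rhsz_val _, if_neg hm0]
      norm_num
    rw [hv, h0]
    rw [abs_of_nonpos (by norm_num), abs_of_nonneg (by norm_num)]
    norm_num
  · rw [Sv_dummy hn j hlt, h0]
    rw [abs_zero, abs_of_nonneg (by norm_num)]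
    norm_num
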